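/- arXiv:2012.10021 — 4 statements merged into one kernel-verified Lean document; each statement's English description precedes it below -/
import Mathlib

section
/- Let p ∈ [0,1] and let D_P, D_N ⊆ ℝⁿ be Lebesgue-measurable sets satisfying the weak partition constraints ∫_{D_P ∩ D_N} P = ∫_{D_P ∩ D_N} N = 0 and ∫_{D_P ∪ D_N} P = ∫_{D_P ∪ D_N} N = 1. Then the optimal domains satisfy L_b[D_P*(p), D_N*(p)] ≤ L_b[D_P, D_N]; that is, D_P*(p) and D_N*(p) minimize the binary classification loss among all admissible pairs of classification domains. -/
open MeasureTheory Set

theorem binary_loss_optimal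
    {n : ℕ} (hn : 1 ≤ n)
    (P N : (Fin n → ℝ) → ℝ)
    (hPmeas : Measurable P) (hNmeas : Measurable N)
    (hPnn : ∀ r, 0 ≤ P r) (hNnn : ∀ r, 0 ≤ N r)
    (hPint : Integrable P) (hNint : Integrable N)
    (hP1 : ∫ r, P r = 1) (hN1 : ∫ r, N r = 1)
    (p : ℝ) (hp0 : 0 ≤ p) (hp1 : p ≤ 1)
    (DP DN : Set (Fin n → ℝ))
    (hDP : MeasurableSet DP) (hDN : MeasurableSet DN)
    (hintP : ∫ r in DP ∩ DN, P r = 0) (hintN : ∫ r in DP ∩ DN, N r = 0)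
    (hunP : ∫ r in DP ∪ DN, P r = 1) (hunN : ∫ r in DP ∪ DN, N r = 1) :
    (1 - p) * (∫ r in {r | p * P r > (1 - p) * N r}, N r)
      + p * (∫ r in {r | (1 - p) * N r > p * P r}, P r)
    ≤ (1 - p) * (∫ r in DP, N r) + p * (∫ r in DN, P r) := by
  set f : (Fin n → ℝ) → ℝ := fun r => p * P r - (1 - p) * N r with hf_def
  have hfint : Integrable f := (hPint.const_mul p).sub (hNint.const_mul (1 - p))
  have hfmeas : Measurable f := (hPmeas.const_mul p).sub (hNmeas.const_mul (1 - p))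
  have hfs : ∀ s : Set (Fin n → ℝ),
      (∫ r in s, f r) = p * (∫ r in s, P r) - (1 - p) * (∫ r in s, N r) := by
    intro s
    rw [show (∫ r in s, f r) = ∫ r in s, (p * P r - (1 - p) * N r) from rfl,
      integral_sub ((hPint.const_mul p).integrableOn)
        ((hNint.const_mul (1 - p)).integrableOn),
      integral_const_mul, integral_const_mul]
  set SP : Set (Fin n → ℝ) := {r | 0 < f r} with hSP_def
  set SN : Set (Fin n → ℝ) := {r | f r < 0} with hSN_def
  have hSP : MeasurableSet SP := measurableSet_lt measurable_const hfmeas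
  have hSN : MeasurableSet SN := measurableSet_lt hfmeas measurable_const
  have hsetP : {r | p * P r > (1 - p) * N r} = SP := by
    ext r; simp only [mem_setOf_eq, hSP_def, hf_def, sub_pos]
  have hsetN : {r | (1 - p) * N r > p * P r} = SN := by
    ext r; simp only [mem_setOf_eq, hSN_def, hf_def, sub_neg]
  rw [hsetP, hsetN]
  -- split lemma
  have hsplit : ∀ g : (Fin n → ℝ) → ℝ, Integrable g → (∫ r in DP ∩ DN, g r) = 0 →
      (∫ r in DP, g r) + (∫ r in DN, g r) = ∫ r in DP ∪ DN, g r := by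
    intro g hg hzero
    have hdn : (∫ r in DN, g r) = ∫ r in DN \ DP, g r := by
      nth_rewrite 1 [show DN = (DN ∩ DP) ∪ (DN \ DP) from (inter_union_diff DN DP).symm]
      rw [setIntegral_union (disjoint_sdiff_right.mono_left inter_subset_right)
        (hDN.diff hDP) hg.integrableOn hg.integrableOn]
      rw [inter_comm] at hzero
      rw [hzero, zero_add]
    rw [show DP ∪ DN = DP ∪ (DN \ DP) from (union_diff_self).symm,
      setIntegral_union disjoint_sdiff_right (hDN.diff hDP)
        hg.integrableOn hg.integrableOn, hdn]
  have hDNP : (∫ r in DN, P r) = 1 - ∫ r in DP, P r := by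
    have := hsplit P hPint hintP; rw [hunP] at this; linarith
  -- RHS = p - ∫_{DP} f
  have hRHS : (1 - p) * (∫ r in DP, N r) + p * (∫ r in DN, P r)
      = p - ∫ r in DP, f r := by
    rw [hDNP, hfs DP]; ring
  -- ∫_{DP} f ≤ ∫_{SP} f
  have hfp_int : Integrable (fun r => max (f r) 0) := hfint.pos_part
  have h1 : (∫ r in DP, f r) ≤ ∫ r in DP, max (f r) 0 :=
    setIntegral_mono hfint.integrableOn hfp_int.integrableOn
      (fun r => le_max_left _ _)
  have h2 : (∫ r in DP, max (f r) 0) ≤ ∫ r, max (f r) 0 :=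
    setIntegral_le_integral hfp_int (ae_of_all _ fun r => le_max_right _ _)
  have h3 : (∫ r, max (f r) 0) = ∫ r in SP, f r := by
    rw [← integral_add_compl hSP hfp_int]
    have e1 : (∫ r in SP, max (f r) 0) = ∫ r in SP, f r :=
      setIntegral_congr_fun hSP fun r hr => max_eq_left (le_of_lt hr)
    have e2 : (∫ r in SPᶜ, max (f r) 0) = 0 := by
      rw [setIntegral_congr_fun hSP.compl
        (g := fun _ => (0 : ℝ))
        (fun r hr => max_eq_right (le_of_not_gt hr))]
      simp
    rw [e1, e2, add_zero]
  have hDPle : (∫ r in DP, f r) ≤ ∫ r in SP, f r := by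
    calc (∫ r in DP, f r) ≤ ∫ r in DP, max (f r) 0 := h1
    _ ≤ ∫ r, max (f r) 0 := h2
    _ = ∫ r in SP, f r := h3
  -- LHS bound
  have hdisj : Disjoint SP SN := by
    rw [disjoint_left]; intro r hr hr'
    have h1 : (0:ℝ) < f r := hr
    have h2 : f r < 0 := hr'
    exact lt_asymm h1 h2
  have hu : (∫ r in SP, P r) + (∫ r in SN, P r) = ∫ r in SP ∪ SN, P r :=
    (setIntegral_union hdisj hSN hPint.integrableOn hPint.integrableOn).symm
  have hule : (∫ r in SP ∪ SN, P r) ≤ 1 := by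
    rw [← hP1]
    exact setIntegral_le_integral hPint (ae_of_all _ hPnn)
  have hSPf : (∫ r in SP, f r) = p * (∫ r in SP, P r) - (1 - p) * (∫ r in SP, N r) :=
    hfs SP
  have hmul : p * ((∫ r in SP, P r) + (∫ r in SN, P r)) ≤ p * 1 :=
    mul_le_mul_of_nonneg_left (by rw [hu]; exact hule) hp0
  nlinarith [hmul, hSPf, hDPle, hRHS]
end

section
/- Let p ∈ [0,1] and let D_P, D_N ⊆ ℝⁿ be Lebesgue-measurable sets satisfying the weak partition constraints ∫_{D_P ∩ D_N} P = ∫_{D_P ∩ D_N} N = 0 and ∫_{D_P ∪ D_N} P = ∫_{D_P ∪ D_N} N = 1. If, in addition, D_P ∩ D_N*(p) has positive Lebesgue measure or D_N ∩ D_P*(p) has positive Lebesgue measure, then the inequality is strict: L_b[D_P*(p), D_N*(p)] < L_b[D_P, D_N]. -/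
/-!
Write `f = p P - (1 - p) N`. The weak partition constraints for `P` give
`L_b[D_P, D_N] = p - ∫_{D_P} f`, while `D_N*(p) ⊆ D_P*(p)ᶜ` and `P ≥ 0` give
`L_b[D_P*(p), D_N*(p)] ≤ p - ∫_{f > 0} f`. Now `∫_{D_P} f ≤ ∫_{f > 0} f`, strictly as soon as
`f < 0` on a non-null part of `D_P`. The other alternative is the same argument with
`(P, p, D_P)` and `(N, 1 - p, D_N)` exchanged.
-/

open MeasureTheory Set

section

variable {α : Type*} [MeasurableSpace α] {μ : Measure α}

theorem setIntegral_union_add_setIntegral_inter {E : Type*} [NormedAddCommGroup E]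
    [NormedSpace ℝ E] {f : α → E} {s t : Set α} (ht : MeasurableSet t)
    (hf : IntegrableOn f (s ∪ t) μ) :
    ∫ x in s ∪ t, f x ∂μ + ∫ x in s ∩ t, f x ∂μ = ∫ x in s, f x ∂μ + ∫ x in t, f x ∂μ := by
  have hs : IntegrableOn f s μ := hf.mono_set subset_union_left
  rw [← integral_add_measure hf (hs.mono_set inter_subset_left),
    Measure.restrict_union_add_inter s ht,
    integral_add_measure hs (hf.mono_set subset_union_right)]

theorem setIntegral_lt_setIntegral_setOf_pos {f : α → ℝ} (hfm : Measurable f)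
    (hfi : Integrable f μ) {s : Set α} (hs : MeasurableSet s) (hneg : 0 < μ (s ∩ {x | f x < 0})) :
    ∫ x in s, f x ∂μ < ∫ x in {x | 0 < f x}, f x ∂μ := by
  have hneg_meas : MeasurableSet {x | f x < 0} := measurableSet_lt hfm measurable_const
  have h_on_neg : ∫ x in s ∩ {x | f x < 0}, f x ∂μ < 0 := by
    have h : 0 < ∫ x in s ∩ {x | f x < 0}, -f x ∂μ := by
      rw [setIntegral_pos_iff_support_of_nonneg_ae (f := fun x => -f x)
        ((ae_restrict_iff' (hs.inter hneg_meas)).2 (ae_of_all _ fun x hx => by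
          simpa using hx.2.le)) hfi.neg.integrableOn]
      refine hneg.trans_le (measure_mono fun x hx => ⟨?_, hx⟩)
      simpa using hx.2.ne
    rw [integral_neg] at h
    linarith
  calc ∫ x in s, f x ∂μ
      = ∫ x in s ∩ {x | f x < 0}, f x ∂μ + ∫ x in s \ {x | f x < 0}, f x ∂μ :=
        (integral_inter_add_sdiff hneg_meas hfi.integrableOn).symm
    _ < ∫ x in s \ {x | f x < 0}, f x ∂μ := by linarith
    _ ≤ ∫ x in {x | 0 ≤ f x}, f x ∂μ :=
        setIntegral_le_nonneg (hs.diff hneg_meas) hfm.stronglyMeasurable hfi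
    _ = ∫ x in {x | 0 < f x}, f x ∂μ :=
        setIntegral_eq_of_subset_of_forall_sdiff_eq_zero (measurableSet_le measurable_const hfm)
          (fun x (hx : 0 < f x) => hx.le) fun x hx => by
            simpa using le_antisymm (not_lt.1 hx.2) hx.1

theorem weighted_loss_lt_of_measure_pos {P N : α → ℝ} (hPm : Measurable P) (hNm : Measurable N)
    (hPi : Integrable P μ) (hNi : Integrable N μ) (hP : ∀ x, 0 ≤ P x) {a b : ℝ} (ha : 0 ≤ a)
    {S T : Set α} (hS : MeasurableSet S) (hT : MeasurableSet T)
    (hinter : ∫ x in S ∩ T, P x ∂μ = 0) (hunion : ∫ x in S ∪ T, P x ∂μ = ∫ x, P x ∂μ)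
    (hpos : 0 < μ (S ∩ {x | b * N x > a * P x})) :
    b * (∫ x in {x | a * P x > b * N x}, N x ∂μ) + a * (∫ x in {x | b * N x > a * P x}, P x ∂μ)
      < b * (∫ x in S, N x ∂μ) + a * (∫ x in T, P x ∂μ) := by
  set f : α → ℝ := fun x => a * P x - b * N x
  have hfm : Measurable f := (hPm.const_mul a).sub (hNm.const_mul b)
  have hA : {x | a * P x > b * N x} = {x | 0 < f x} := by ext; simp [f]
  have hB : {x | b * N x > a * P x} = {x | f x < 0} := by ext; simp [f]
  have hf_setIntegral (s : Set α) :
      ∫ x in s, f x ∂μ = a * ∫ x in s, P x ∂μ - b * ∫ x in s, N x ∂μ := by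
    rw [integral_sub (hPi.const_mul a).integrableOn (hNi.const_mul b).integrableOn,
      integral_const_mul, integral_const_mul]
  have hT_eq : ∫ x in T, P x ∂μ = ∫ x, P x ∂μ - ∫ x in S, P x ∂μ := by
    linarith [setIntegral_union_add_setIntegral_inter hT hPi.integrableOn (s := S), hinter, hunion]
  have hB_le : ∫ x in {x | f x < 0}, P x ∂μ ≤ ∫ x, P x ∂μ - ∫ x in {x | 0 < f x}, P x ∂μ := by
    rw [← setIntegral_compl (measurableSet_lt measurable_const hfm) hPi]
    exact setIntegral_mono_set hPi.integrableOn (ae_of_all _ hP)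
      (ae_of_all _ fun x (hx : f x < 0) => hx.not_gt)
  have hS_lt := setIntegral_lt_setIntegral_setOf_pos hfm
    ((hPi.const_mul a).sub (hNi.const_mul b)) hS (hB ▸ hpos)
  rw [hA, hB]
  calc b * (∫ x in {x | 0 < f x}, N x ∂μ) + a * (∫ x in {x | f x < 0}, P x ∂μ)
      ≤ b * (∫ x in {x | 0 < f x}, N x ∂μ)
          + a * (∫ x, P x ∂μ - ∫ x in {x | 0 < f x}, P x ∂μ) := by gcongr
    _ = a * (∫ x, P x ∂μ) - ∫ x in {x | 0 < f x}, f x ∂μ := by rw [hf_setIntegral]; ring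
    _ < a * (∫ x, P x ∂μ) - ∫ x in S, f x ∂μ := by linarith
    _ = b * (∫ x in S, N x ∂μ) + a * (∫ x in T, P x ∂μ) := by
        rw [hf_setIntegral, hT_eq]; ring

end

theorem binary_loss_strict_general
    {n : ℕ}
    (P N : (Fin n → ℝ) → ℝ)
    (hPmeas : Measurable P) (hNmeas : Measurable N)
    (hPnn : ∀ r, 0 ≤ P r) (hNnn : ∀ r, 0 ≤ N r)
    (hPint : Integrable P) (hNint : Integrable N)
    (hP1 : ∫ r, P r = 1) (hN1 : ∫ r, N r = 1)
    (p : ℝ) (hp0 : 0 ≤ p) (hp1 : p ≤ 1)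
    (DP DN : Set (Fin n → ℝ))
    (hDP : MeasurableSet DP) (hDN : MeasurableSet DN)
    (hintP : ∫ r in DP ∩ DN, P r = 0) (hintN : ∫ r in DP ∩ DN, N r = 0)
    (hunP : ∫ r in DP ∪ DN, P r = 1) (hunN : ∫ r in DP ∪ DN, N r = 1)
    (hpos : 0 < volume (DP ∩ {r | (1 - p) * N r > p * P r})
      ∨ 0 < volume (DN ∩ {r | p * P r > (1 - p) * N r})) :
    (1 - p) * (∫ r in {r | p * P r > (1 - p) * N r}, N r)
      + p * (∫ r in {r | (1 - p) * N r > p * P r}, P r)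
    < (1 - p) * (∫ r in DP, N r) + p * (∫ r in DN, P r) := by
  rcases hpos with hpos | hpos
  · exact weighted_loss_lt_of_measure_pos hPmeas hNmeas hPint hNint hPnn hp0 hDP hDN hintP
      (hunP.trans hP1.symm) hpos
  · have h := weighted_loss_lt_of_measure_pos hNmeas hPmeas hNint hPint hNnn (sub_nonneg.2 hp1)
      hDN hDP (by rwa [inter_comm]) (by rw [union_comm, hunN, hN1]) hpos
    linarith

theorem binary_loss_strict
    {n : ℕ} (hn : 1 ≤ n)
    (P N : (Fin n → ℝ) → ℝ)
    (hPmeas : Measurable P) (hNmeas : Measurable N)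
    (hPnn : ∀ r, 0 ≤ P r) (hNnn : ∀ r, 0 ≤ N r)
    (hPint : Integrable P) (hNint : Integrable N)
    (hP1 : ∫ r, P r = 1) (hN1 : ∫ r, N r = 1)
    (p : ℝ) (hp0 : 0 ≤ p) (hp1 : p ≤ 1)
    (DP DN : Set (Fin n → ℝ))
    (hDP : MeasurableSet DP) (hDN : MeasurableSet DN)
    (hintP : ∫ r in DP ∩ DN, P r = 0) (hintN : ∫ r in DP ∩ DN, N r = 0)
    (hunP : ∫ r in DP ∪ DN, P r = 1) (hunN : ∫ r in DP ∪ DN, N r = 1)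
    (hpos : 0 < volume (DP ∩ {r | (1 - p) * N r > p * P r})
      ∨ 0 < volume (DN ∩ {r | p * P r > (1 - p) * N r})) :
    (1 - p) * (∫ r in {r | p * P r > (1 - p) * N r}, N r)
      + p * (∫ r in {r | (1 - p) * N r > p * P r}, P r)
    < (1 - p) * (∫ r in DP, N r) + p * (∫ r in DN, P r) :=
  binary_loss_strict_general P N hPmeas hNmeas hPnn hNnn hPint hNint hP1 hN1 p hp0 hp1 DP DN hDP hDN
    hintP hintN hunP hunN hpos
end

section
/- Let 0 ≤ p_l ≤ p_h ≤ 1. For all Lebesgue-measurable sets D_P, D_N ⊆ ℝⁿ (with no partition constraints imposed), the ternary loss satisfies L_t[D_P†, D_N†] ≤ L_t[D_P, D_N]; that is, the domains D_P† and D_N† minimize the ternary classification loss. -/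
open MeasureTheory Set

lemma neg_set_integral_le {α : Type*} [MeasurableSpace α] {μ : Measure α}
    {g : α → ℝ} (hg : Integrable g μ) (hmeas : Measurable g)
    {D : Set α} (hD : MeasurableSet D) :
    ∫ x in {x | g x < 0}, g x ∂μ ≤ ∫ x in D, g x ∂μ := by
  have hS : MeasurableSet {x | g x < 0} := measurableSet_lt hmeas measurable_const
  have h1 : ∫ x in {x | g x < 0}, g x ∂μ
      = ∫ x in D ∩ {x | g x < 0}, g x ∂μ + ∫ x in Dᶜ ∩ {x | g x < 0}, g x ∂μ := by
    rw [← setIntegral_union]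
    · congr 1
      rw [← Set.union_inter_distrib_right, Set.union_compl_self, Set.univ_inter]
    · exact (disjoint_compl_right.mono (Set.inter_subset_left) (Set.inter_subset_left) : _)
    · exact hD.compl.inter hS
    · exact hg.integrableOn.mono_set (Set.inter_subset_right)
    · exact hg.integrableOn.mono_set (Set.inter_subset_right)
  have h2 : ∫ x in D, g x ∂μ
      = ∫ x in D ∩ {x | g x < 0}, g x ∂μ + ∫ x in D ∩ {x | g x < 0}ᶜ, g x ∂μ := by
    rw [← setIntegral_union]
    · congr 1
      rw [← Set.inter_union_distrib_left, Set.union_compl_self, Set.inter_univ]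
    · exact disjoint_compl_right.mono Set.inter_subset_right Set.inter_subset_right
    · exact (hD.inter hS.compl)
    · exact hg.integrableOn.mono_set (Set.inter_subset_left)
    · exact hg.integrableOn.mono_set (Set.inter_subset_left)
  have hneg : ∫ x in Dᶜ ∩ {x | g x < 0}, g x ∂μ ≤ 0 := by
    apply setIntegral_nonpos (hD.compl.inter hS)
    intro x hx
    exact le_of_lt hx.2
  have hpos : 0 ≤ ∫ x in D ∩ {x | g x < 0}ᶜ, g x ∂μ := by
    apply setIntegral_nonneg (hD.inter hS.compl)
    intro x hx
    simpa using hx.2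
  rw [h1, h2]
  linarith

theorem ternary_loss_optimal
    {n : ℕ} (hn : 1 ≤ n)
    (P N : (Fin n → ℝ) → ℝ)
    (hPmeas : Measurable P) (hNmeas : Measurable N)
    (hPnn : ∀ r, 0 ≤ P r) (hNnn : ∀ r, 0 ≤ N r)
    (hPint : Integrable P) (hNint : Integrable N)
    (hP1 : ∫ r, P r = 1) (hN1 : ∫ r, N r = 1)
    (pl ph : ℝ) (hpl : 0 ≤ pl) (hlh : pl ≤ ph) (hph : ph ≤ 1)
    (DP DN : Set (Fin n → ℝ))
    (hDP : MeasurableSet DP) (hDN : MeasurableSet DN) :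
    (1 - pl) * (∫ r in {r | pl * P r > (1 - pl) * N r}, N r)
      + ph * (∫ r in {r | (1 - ph) * N r > ph * P r}, P r)
      - pl * (∫ r in {r | pl * P r > (1 - pl) * N r}, P r)
      - (1 - ph) * (∫ r in {r | (1 - ph) * N r > ph * P r}, N r)
    ≤ (1 - pl) * (∫ r in DP, N r) + ph * (∫ r in DN, P r)
      - pl * (∫ r in DP, P r) - (1 - ph) * (∫ r in DN, N r) := by
  set g1 : (Fin n → ℝ) → ℝ := fun r => (1 - pl) * N r - pl * P r with hg1def
  set g2 : (Fin n → ℝ) → ℝ := fun r => ph * P r - (1 - ph) * N r with hg2def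
  have hg1int : Integrable g1 := (hNint.const_mul _).sub (hPint.const_mul _)
  have hg2int : Integrable g2 := (hPint.const_mul _).sub (hNint.const_mul _)
  have hg1meas : Measurable g1 := (hNmeas.const_mul _).sub (hPmeas.const_mul _)
  have hg2meas : Measurable g2 := (hPmeas.const_mul _).sub (hNmeas.const_mul _)
  have hset1 : {r | pl * P r > (1 - pl) * N r} = {x | g1 x < 0} := by
    ext x; simp [hg1def, sub_neg, gt_iff_lt]
  have hset2 : {r | (1 - ph) * N r > ph * P r} = {x | g2 x < 0} := by
    ext x; simp [hg2def, sub_neg, gt_iff_lt]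
  have key1 := neg_set_integral_le (μ := volume) hg1int hg1meas hDP
  have key2 := neg_set_integral_le (μ := volume) hg2int hg2meas hDN
  have expand : ∀ (a b : ℝ) (S : Set (Fin n → ℝ)), MeasurableSet S →
      ∫ x in S, (a * N x - b * P x) = a * (∫ r in S, N r) - b * (∫ r in S, P r) := by
    intro a b S hS
    rw [integral_sub ((hNint.integrableOn).const_mul _) ((hPint.integrableOn).const_mul _),
      integral_const_mul, integral_const_mul]
  have hSm1 : MeasurableSet {x | g1 x < 0} := measurableSet_lt hg1meas measurable_const
  have hSm2 : MeasurableSet {x | g2 x < 0} := measurableSet_lt hg2meas measurable_const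
  have e1 := expand (1 - pl) pl _ hSm1
  have e2 : ∫ x in {x | g2 x < 0}, g2 x
      = ph * (∫ r in {x | g2 x < 0}, P r) - (1 - ph) * (∫ r in {x | g2 x < 0}, N r) := by
    rw [integral_sub ((hPint.integrableOn).const_mul _) ((hNint.integrableOn).const_mul _),
      integral_const_mul, integral_const_mul]
  have e3 := expand (1 - pl) pl _ hDP
  have e4 : ∫ x in DN, g2 x
      = ph * (∫ r in DN, P r) - (1 - ph) * (∫ r in DN, N r) := by
    rw [integral_sub ((hPint.integrableOn).const_mul _) ((hNint.integrableOn).const_mul _),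
      integral_const_mul, integral_const_mul]
  rw [hset1, hset2]
  have key1' : (1 - pl) * (∫ r in {x | g1 x < 0}, N r) - pl * (∫ r in {x | g1 x < 0}, P r)
      ≤ (1 - pl) * (∫ r in DP, N r) - pl * (∫ r in DP, P r) := by
    rw [← e1, ← e3]; exact key1
  have key2' : ph * (∫ r in {x | g2 x < 0}, P r) - (1 - ph) * (∫ r in {x | g2 x < 0}, N r)
      ≤ ph * (∫ r in DN, P r) - (1 - ph) * (∫ r in DN, N r) := by
    rw [← e2, ← e4]; exact key2
  linarith
end

section
/- Let 0 ≤ p_l ≤ p_h ≤ 1 and let D_P, D_N ⊆ ℝⁿ be Lebesgue-measurable. If at least one of the following sets has positive Lebesgue measure: (i) D_P† \ D_P, (ii) D_N† \ D_N, (iii) (D_P \ D_P†) ∩ {r : (1−p_l)·N(r) > p_l·P(r)}, or (iv) (D_N \ D_N†) ∩ {r : p_h·P(r) > (1−p_h)·N(r)}, then the minimization is strict: L_t[D_P†, D_N†] < L_t[D_P, D_N]. -/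
open MeasureTheory Set Function

lemma aux_le {α : Type*} [MeasurableSpace α] {μ : Measure α} {f : α → ℝ}
    (hfm : Measurable f) (hf : Integrable f μ) {D : Set α} (hD : MeasurableSet D) :
    ∫ x in {x | f x < 0}, f x ∂μ ≤ ∫ x in D, f x ∂μ := by
  set S : Set α := {x | f x < 0} with hSdef
  have hS : MeasurableSet S := measurableSet_lt hfm measurable_const
  have split1 : (∫ x in D ∩ S, f x ∂μ) + ∫ x in D \ S, f x ∂μ = ∫ x in D, f x ∂μ :=
    integral_inter_add_diff hS hf.integrableOn
  have split2 : (∫ x in S ∩ D, f x ∂μ) + ∫ x in S \ D, f x ∂μ = ∫ x in S, f x ∂μ :=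
    integral_inter_add_diff hD hf.integrableOn
  have h1 : 0 ≤ ∫ x in D \ S, f x ∂μ :=
    setIntegral_nonneg (hD.diff hS) (fun x hx => not_lt.1 hx.2)
  have h2 : (∫ x in S \ D, f x ∂μ) ≤ 0 :=
    setIntegral_nonpos (hS.diff hD) (fun x hx => le_of_lt hx.1)
  rw [inter_comm] at split2
  linarith

lemma aux_lt {α : Type*} [MeasurableSpace α] {μ : Measure α} {f : α → ℝ}
    (hfm : Measurable f) (hf : Integrable f μ) {D : Set α} (hD : MeasurableSet D)
    (h : 0 < μ ({x | f x < 0} \ D) ∨ 0 < μ ((D \ {x | f x < 0}) ∩ {x | 0 < f x})) :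
    ∫ x in {x | f x < 0}, f x ∂μ < ∫ x in D, f x ∂μ := by
  set S : Set α := {x | f x < 0} with hSdef
  have hS : MeasurableSet S := measurableSet_lt hfm measurable_const
  have split1 : (∫ x in D ∩ S, f x ∂μ) + ∫ x in D \ S, f x ∂μ = ∫ x in D, f x ∂μ :=
    integral_inter_add_diff hS hf.integrableOn
  have split2 : (∫ x in S ∩ D, f x ∂μ) + ∫ x in S \ D, f x ∂μ = ∫ x in S, f x ∂μ :=
    integral_inter_add_diff hD hf.integrableOn
  rw [inter_comm] at split2
  rcases h with h | h
  · -- ∫ over S \ D is strictly negative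
    have h1 : 0 ≤ ∫ x in D \ S, f x ∂μ :=
      setIntegral_nonneg (hD.diff hS) (fun x hx => not_lt.1 hx.2)
    have hneg : 0 < ∫ x in S \ D, (-f x) ∂μ := by
      rw [setIntegral_pos_iff_support_of_nonneg_ae]
      · refine lt_of_lt_of_le h (measure_mono ?_)
        intro x hx
        exact ⟨by simpa using ne_of_lt hx.1, hx⟩
      · filter_upwards [ae_restrict_mem (hS.diff hD)] with x hx
        simpa using le_of_lt hx.1
      · exact hf.neg.integrableOn
    rw [integral_neg] at hneg
    linarith
  · -- ∫ over D \ S is strictly positive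
    have h2 : (∫ x in S \ D, f x ∂μ) ≤ 0 :=
      setIntegral_nonpos (hS.diff hD) (fun x hx => le_of_lt hx.1)
    have hpos : 0 < ∫ x in D \ S, f x ∂μ := by
      rw [setIntegral_pos_iff_support_of_nonneg_ae]
      · refine lt_of_lt_of_le h (measure_mono ?_)
        intro x hx
        exact ⟨ne_of_gt hx.2, hx.1⟩
      · filter_upwards [ae_restrict_mem (hD.diff hS)] with x hx
        simpa using not_lt.1 hx.2
      · exact hf.integrableOn
    linarith

theorem ternary_loss_strict
    {n : ℕ} (hn : 1 ≤ n)
    (P N : (Fin n → ℝ) → ℝ)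
    (hPmeas : Measurable P) (hNmeas : Measurable N)
    (hPnn : ∀ r, 0 ≤ P r) (hNnn : ∀ r, 0 ≤ N r)
    (hPint : Integrable P) (hNint : Integrable N)
    (hP1 : ∫ r, P r = 1) (hN1 : ∫ r, N r = 1)
    (pl ph : ℝ) (hpl : 0 ≤ pl) (hlh : pl ≤ ph) (hph : ph ≤ 1)
    (DP DN : Set (Fin n → ℝ))
    (hDP : MeasurableSet DP) (hDN : MeasurableSet DN)
    (hpos : 0 < volume ({r | pl * P r > (1 - pl) * N r} \ DP)
      ∨ 0 < volume ({r | (1 - ph) * N r > ph * P r} \ DN)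
      ∨ 0 < volume ((DP \ {r | pl * P r > (1 - pl) * N r})
          ∩ {r | (1 - pl) * N r > pl * P r})
      ∨ 0 < volume ((DN \ {r | (1 - ph) * N r > ph * P r})
          ∩ {r | ph * P r > (1 - ph) * N r})) :
    (1 - pl) * (∫ r in {r | pl * P r > (1 - pl) * N r}, N r)
      + ph * (∫ r in {r | (1 - ph) * N r > ph * P r}, P r)
      - pl * (∫ r in {r | pl * P r > (1 - pl) * N r}, P r)
      - (1 - ph) * (∫ r in {r | (1 - ph) * N r > ph * P r}, N r)
    < (1 - pl) * (∫ r in DP, N r) + ph * (∫ r in DN, P r)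
      - pl * (∫ r in DP, P r) - (1 - ph) * (∫ r in DN, N r) := by
  set f : (Fin n → ℝ) → ℝ := fun x => (1 - pl) * N x - pl * P x with hfdef
  set g : (Fin n → ℝ) → ℝ := fun x => ph * P x - (1 - ph) * N x with hgdef
  have hfm : Measurable f := (hNmeas.const_mul _).sub (hPmeas.const_mul _)
  have hgm : Measurable g := (hPmeas.const_mul _).sub (hNmeas.const_mul _)
  have hfi : Integrable f := (hNint.const_mul _).sub (hPint.const_mul _)
  have hgi : Integrable g := (hPint.const_mul _).sub (hNint.const_mul _)
  have hSf : {r | pl * P r > (1 - pl) * N r} = {x | f x < 0} := by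
    ext r; simp only [hfdef, mem_setOf_eq, sub_neg, gt_iff_lt]
  have hSg : {r | (1 - ph) * N r > ph * P r} = {x | g x < 0} := by
    ext r; simp only [hgdef, mem_setOf_eq, sub_neg, gt_iff_lt]
  have hPf : {r | (1 - pl) * N r > pl * P r} = {x | 0 < f x} := by
    ext r; simp only [hfdef, mem_setOf_eq, sub_pos, gt_iff_lt]
  have hPg : {r | ph * P r > (1 - ph) * N r} = {x | 0 < g x} := by
    ext r; simp only [hgdef, mem_setOf_eq, sub_pos, gt_iff_lt]
  have hval : ∀ (a b : ℝ) (D : Set (Fin n → ℝ)),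
      (∫ x in D, (a * N x - b * P x)) = a * (∫ x in D, N x) - b * (∫ x in D, P x) := by
    intro a b D
    rw [integral_sub ((hNint.integrableOn).const_mul _) ((hPint.integrableOn).const_mul _),
      integral_const_mul, integral_const_mul]
  have hval2 : ∀ (a b : ℝ) (D : Set (Fin n → ℝ)),
      (∫ x in D, (a * P x - b * N x)) = a * (∫ x in D, P x) - b * (∫ x in D, N x) := by
    intro a b D
    rw [integral_sub ((hPint.integrableOn).const_mul _) ((hNint.integrableOn).const_mul _),
      integral_const_mul, integral_const_mul]
  have hfS : MeasurableSet {x | f x < 0} := measurableSet_lt hfm measurable_const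
  have hgS : MeasurableSet {x | g x < 0} := measurableSet_lt hgm measurable_const
  have hA : (∫ x in {x | f x < 0}, f x) = (1 - pl) * (∫ x in {x | f x < 0}, N x)
      - pl * (∫ x in {x | f x < 0}, P x) := hval _ _ _
  have hB : (∫ x in DP, f x) = (1 - pl) * (∫ x in DP, N x) - pl * (∫ x in DP, P x) := hval _ _ _
  have hC : (∫ x in {x | g x < 0}, g x) = ph * (∫ x in {x | g x < 0}, P x)
      - (1 - ph) * (∫ x in {x | g x < 0}, N x) := hval2 _ _ _
  have hE : (∫ x in DN, g x) = ph * (∫ x in DN, P x) - (1 - ph) * (∫ x in DN, N x) := hval2 _ _ _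
  rw [hSf, hSg]
  have hfle : (∫ x in {x | f x < 0}, f x) ≤ ∫ x in DP, f x := aux_le hfm hfi hDP
  have hgle : (∫ x in {x | g x < 0}, g x) ≤ ∫ x in DN, g x := aux_le hgm hgi hDN
  rw [hSf, hSg, hPf, hPg] at hpos
  have key : (∫ x in {x | f x < 0}, f x) + (∫ x in {x | g x < 0}, g x)
      < (∫ x in DP, f x) + (∫ x in DN, g x) := by
    rcases hpos with h | h | h | h
    · have := aux_lt hfm hfi hDP (Or.inl h); linarith
    · have := aux_lt hgm hgi hDN (Or.inl h); linarith
    · have := aux_lt hfm hfi hDP (Or.inr h); linarith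
    · have := aux_lt hgm hgi hDN (Or.inr h); linarith
  linarith [hA, hB, hC, hE, key]
end
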